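/- Let p ≥ 2, let κ_1 < κ_2 < … < κ_p be real numbers, let m_1, …, m_p be positive real numbers, let c be a real number, and let a : ℝ → ℝ be continuous. Fix i with 1 ≤ i ≤ p − 1 and suppose κ_i² + c > 0 and κ_{i+1}² + c > 0. Then there exists s ∈ (κ_i, κ_{i+1}) such that Σ_{k=1}^p m_k·(κ_k·s + c)/(s − κ_k) = (Σ_{k=1}^p m_k)·a(s). -/
import Mathlib


open Finset Filter Topology

/-- Existence step (intermediate value theorem) in the proof of Corollary 1.5:
between two consecutive principal curvatures there is a solution `s` of the
marginally trapped equation. -/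
theorem stmt9 (p : ℕ) (hp : 2 ≤ p) (κ m : Fin p → ℝ) (hκ : StrictMono κ)
    (hm : ∀ k, 0 < m k) (c : ℝ) (a : ℝ → ℝ) (ha : Continuous a)
    (i : ℕ) (hi : i + 1 < p)
    (h1 : κ ⟨i, by omega⟩ ^ 2 + c > 0) (h2 : κ ⟨i + 1, hi⟩ ^ 2 + c > 0) :
    ∃ s ∈ Set.Ioo (κ ⟨i, by omega⟩) (κ ⟨i + 1, hi⟩),
      ∑ k, m k * (κ k * s + c) / (s - κ k) = (∑ k, m k) * a s := by
  set ki : Fin p := ⟨i, by omega⟩ with hki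
  set kj : Fin p := ⟨i + 1, hi⟩ with hkj
  set x := κ ki with hx
  set y := κ kj with hy
  have hxy : x < y := hκ (by simp [hki, hkj, Fin.lt_def])
  set f : ℝ → ℝ := fun s => (∑ k, m k * (κ k * s + c) / (s - κ k)) - (∑ k, m k) * a s
    with hf
  -- denominators don't vanish on the open interval
  have hne : ∀ s ∈ Set.Ioo x y, ∀ k : Fin p, s - κ k ≠ 0 := by
    intro s hs k
    rcases le_or_gt (k : ℕ) i with h | h
    · have : κ k ≤ x := hκ.monotone (by simp [hki, Fin.le_def, h])
      exact sub_ne_zero.2 (ne_of_gt (lt_of_le_of_lt this hs.1))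
    · have : y ≤ κ k := hκ.monotone (by simp [hkj, Fin.le_def]; omega)
      exact sub_ne_zero.2 (ne_of_lt (lt_of_lt_of_le hs.2 this))
  -- splitting off the singular term
  have hsplit : ∀ (kz : Fin p) (s : ℝ),
      f s = m kz * (κ kz * s + c) / (s - κ kz)
        + ((∑ k ∈ univ.erase kz, m k * (κ k * s + c) / (s - κ k)) - (∑ k, m k) * a s) := by
    intro kz s
    have h := Finset.add_sum_erase univ (fun k => m k * (κ k * s + c) / (s - κ k))
      (Finset.mem_univ kz)
    simp only [hf]
    rw [← h]
    ring
  -- the regular part converges near any point z = κ kz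
  have hrest : ∀ (z : ℝ) (kz : Fin p), (∀ k : Fin p, k ≠ kz → z - κ k ≠ 0) →
      Tendsto (fun s => (∑ k ∈ univ.erase kz, m k * (κ k * s + c) / (s - κ k))
        - (∑ k, m k) * a s) (𝓝 z)
        (𝓝 ((∑ k ∈ univ.erase kz, m k * (κ k * z + c) / (z - κ k)) - (∑ k, m k) * a z)) := by
    intro z kz hnz
    apply Filter.Tendsto.sub
    · apply tendsto_finset_sum
      intro k hk
      have hk' : k ≠ kz := (Finset.mem_erase.1 hk).1
      exact Filter.Tendsto.div
        (Filter.Tendsto.const_mul _ (((continuous_const.mul continuous_id).add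
          continuous_const).tendsto z))
        ((continuous_id.sub continuous_const).tendsto z) (hnz k hk')
    · exact (continuous_const.mul ha).tendsto z
  have hnzx : ∀ k : Fin p, k ≠ ki → x - κ k ≠ 0 := fun k hk =>
    sub_ne_zero.2 fun h => hk (hκ.injective h.symm)
  have hnzy : ∀ k : Fin p, k ≠ kj → y - κ k ≠ 0 := fun k hk =>
    sub_ne_zero.2 fun h => hk (hκ.injective h.symm)
  -- f → +∞ as s → x⁺
  have htop : Tendsto f (𝓝[>] x) atTop := by
    have hden : Tendsto (fun s => s - x) (𝓝[>] x) (𝓝[>] (0:ℝ)) := by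
      apply tendsto_nhdsWithin_of_tendsto_nhds_of_eventually_within
      · have h0 : Tendsto (fun s : ℝ => s - x) (𝓝 x) (𝓝 0) := by
          simpa using (continuous_sub_right x).tendsto x
        exact h0.mono_left nhdsWithin_le_nhds
      · filter_upwards [self_mem_nhdsWithin] with s hs
        exact sub_pos.2 (Set.mem_Ioi.1 hs)
    have hnum : Tendsto (fun s => m ki * (κ ki * s + c)) (𝓝[>] x)
        (𝓝 (m ki * (κ ki * x + c))) :=
      ((Filter.Tendsto.const_mul _ (((continuous_const.mul continuous_id).add
        continuous_const).tendsto x))).mono_left nhdsWithin_le_nhds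
    have hpos : 0 < m ki * (κ ki * x + c) := by
      apply mul_pos (hm ki)
      have : κ ki * x + c = κ ki ^ 2 + c := by rw [hx]; ring
      rw [this]; exact h1
    have hsing : Tendsto (fun s => m ki * (κ ki * s + c) / (s - κ ki)) (𝓝[>] x) atTop := by
      have := Filter.Tendsto.pos_mul_atTop hpos hnum (hden.inv_tendsto_nhdsGT_zero)
      refine this.congr fun s => ?_
      simp only [Pi.inv_apply]
      rw [div_eq_mul_inv]
    have hreg := (hrest x ki hnzx).mono_left (nhdsWithin_le_nhds : 𝓝[>] x ≤ 𝓝 x)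
    have := Filter.Tendsto.atTop_add hsing hreg
    exact this.congr fun s => (hsplit ki s).symm
  -- f → -∞ as s → y⁻
  have hbot : Tendsto f (𝓝[<] y) atBot := by
    have hden : Tendsto (fun s => y - s) (𝓝[<] y) (𝓝[>] (0:ℝ)) := by
      apply tendsto_nhdsWithin_of_tendsto_nhds_of_eventually_within
      · have h0 : Tendsto (fun s : ℝ => y - s) (𝓝 y) (𝓝 0) := by
          simpa using (continuous_sub_left y).tendsto y
        exact h0.mono_left nhdsWithin_le_nhds
      · filter_upwards [self_mem_nhdsWithin] with s hs
        exact sub_pos.2 (Set.mem_Iio.1 hs)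
    have hnum : Tendsto (fun s => m kj * (κ kj * s + c)) (𝓝[<] y)
        (𝓝 (m kj * (κ kj * y + c))) :=
      ((Filter.Tendsto.const_mul _ (((continuous_const.mul continuous_id).add
        continuous_const).tendsto y))).mono_left nhdsWithin_le_nhds
    have hpos : 0 < m kj * (κ kj * y + c) := by
      apply mul_pos (hm kj)
      have : κ kj * y + c = κ kj ^ 2 + c := by rw [hy]; ring
      rw [this]; exact h2
    have hsing : Tendsto (fun s => m kj * (κ kj * s + c) / (s - κ kj)) (𝓝[<] y) atBot := by
      have h' := Filter.Tendsto.pos_mul_atTop hpos hnum (hden.inv_tendsto_nhdsGT_zero)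
      have h'' := tendsto_neg_atTop_atBot.comp h'
      refine h''.congr fun s => ?_
      simp only [Function.comp_apply, Pi.inv_apply]
      rw [div_eq_mul_inv, show s - y = -(y - s) by ring, inv_neg]
      ring
    have hreg := (hrest y kj hnzy).mono_left (nhdsWithin_le_nhds : 𝓝[<] y ≤ 𝓝 y)
    have := Filter.Tendsto.atBot_add hsing hreg
    exact this.congr fun s => (hsplit kj s).symm
  -- pick points where f is negative and positive
  have hmemy : Set.Ioo x y ∈ 𝓝[<] y := Ioo_mem_nhdsLT_of_mem ⟨hxy, le_refl y⟩
  obtain ⟨s₂, hs₂f, hs₂⟩ := ((hbot.eventually_lt_atBot 0).and hmemy).exists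
  have hmemx : Set.Ioo x s₂ ∈ 𝓝[>] x := Ioo_mem_nhdsGT_of_mem ⟨le_refl x, hs₂.1⟩
  obtain ⟨s₁, hs₁f, hs₁⟩ := ((htop.eventually_gt_atTop 0).and hmemx).exists
  have hsub : Set.Icc s₁ s₂ ⊆ Set.Ioo x y := fun s hs =>
    ⟨lt_of_lt_of_le hs₁.1 hs.1, lt_of_le_of_lt hs.2 hs₂.2⟩
  have hc : ContinuousOn f (Set.Icc s₁ s₂) := by
    apply ContinuousOn.sub
    · apply continuousOn_finset_sum
      intro k _
      exact ContinuousOn.div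
        ((continuous_const.mul ((continuous_const.mul continuous_id).add
          continuous_const)).continuousOn)
        ((continuous_id.sub continuous_const).continuousOn)
        (fun s hs => hne s (hsub hs) k)
    · exact (continuous_const.mul ha).continuousOn
  have hivt := intermediate_value_Icc' (le_of_lt hs₁.2) hc
  have h0 : (0:ℝ) ∈ Set.Icc (f s₂) (f s₁) := ⟨le_of_lt hs₂f, le_of_lt hs₁f⟩
  obtain ⟨s, hs, hfs⟩ := hivt h0
  refine ⟨s, hsub hs, ?_⟩
  have : (∑ k, m k * (κ k * s + c) / (s - κ k)) - (∑ k, m k) * a s = 0 := hfs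
  linarith
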